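/- arXiv:math/0603628 — 3 statements merged into one kernel-verified Lean document; each statement's English description precedes it below -/
import Mathlib

section
/- Let Ω ⊆ ℝ² be open and f : Ω → ℝ a positive C² function. Suppose W₁, W₂ : Ω → ℝ are C² and satisfy ∂_z̄(W₁ + i W₂) = (f_z̄/f)·(W₁ − i W₂) on Ω. Then ΔW₁ = (Δf/f)·W₁ on Ω. -/
section Aux

open Filter

variable {Ω : Set (ℝ × ℝ)}

/-- derivative along x-line from differentiability -/
lemma hasDerivAt_lineX {F : ℝ × ℝ → ℝ} {p : ℝ × ℝ} (h : DifferentiableAt ℝ F p) :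
    HasDerivAt (fun t => F (t, p.2)) (fderiv ℝ F p (1, 0)) p.1 := by
  have h1 : HasDerivAt (fun t : ℝ => (t, p.2)) ((1 : ℝ), (0 : ℝ)) p.1 :=
    (hasDerivAt_id p.1).prodMk (hasDerivAt_const p.1 p.2)
  exact h.hasFDerivAt.comp_hasDerivAt p.1 h1

lemma hasDerivAt_lineY {F : ℝ × ℝ → ℝ} {p : ℝ × ℝ} (h : DifferentiableAt ℝ F p) :
    HasDerivAt (fun t => F (p.1, t)) (fderiv ℝ F p (0, 1)) p.2 := by
  have h1 : HasDerivAt (fun t : ℝ => (p.1, t)) ((0 : ℝ), (1 : ℝ)) p.2 :=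
    (hasDerivAt_const p.2 p.1).prodMk (hasDerivAt_id p.2)
  exact h.hasFDerivAt.comp_hasDerivAt p.2 h1

lemma memX (hΩ : IsOpen Ω) {p : ℝ × ℝ} (hp : p ∈ Ω) :
    {t : ℝ | (t, p.2) ∈ Ω} ∈ nhds p.1 := by
  have hc : Continuous fun t : ℝ => (t, p.2) := by fun_prop
  exact hc.continuousAt.preimage_mem_nhds (hΩ.mem_nhds (by simpa using hp))

lemma memY (hΩ : IsOpen Ω) {p : ℝ × ℝ} (hp : p ∈ Ω) :
    {t : ℝ | (p.1, t) ∈ Ω} ∈ nhds p.2 := by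
  have hc : Continuous fun t : ℝ => (p.1, t) := by fun_prop
  exact hc.continuousAt.preimage_mem_nhds (hΩ.mem_nhds (by simpa using hp))

/-- if G = H on Ω, their x-line derivatives at an interior point agree -/
lemma derivX_eq_on {G H : ℝ × ℝ → ℝ} {p : ℝ × ℝ} (hΩ : IsOpen Ω) (hp : p ∈ Ω)
    (hGH : ∀ q ∈ Ω, G q = H q) {g h : ℝ}
    (hG : HasDerivAt (fun t => G (t, p.2)) g p.1)
    (hH : HasDerivAt (fun t => H (t, p.2)) h p.1) : g = h := by
  have heq : (fun t => G (t, p.2)) =ᶠ[nhds p.1] fun t => H (t, p.2) :=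
    Filter.eventuallyEq_of_mem (memX hΩ hp) fun t ht => hGH _ ht
  rw [← hG.deriv, ← hH.deriv]; exact heq.deriv_eq

lemma derivY_eq_on {G H : ℝ × ℝ → ℝ} {p : ℝ × ℝ} (hΩ : IsOpen Ω) (hp : p ∈ Ω)
    (hGH : ∀ q ∈ Ω, G q = H q) {g h : ℝ}
    (hG : HasDerivAt (fun t => G (p.1, t)) g p.2)
    (hH : HasDerivAt (fun t => H (p.1, t)) h p.2) : g = h := by
  have heq : (fun t => G (p.1, t)) =ᶠ[nhds p.2] fun t => H (p.1, t) :=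
    Filter.eventuallyEq_of_mem (memY hΩ hp) fun t ht => hGH _ ht
  rw [← hG.deriv, ← hH.deriv]; exact heq.deriv_eq

lemma diffAt_of_C2 {F : ℝ × ℝ → ℝ} {p : ℝ × ℝ} (hΩ : IsOpen Ω)
    (hF : ContDiffOn ℝ 2 F Ω) (hp : p ∈ Ω) : DifferentiableAt ℝ F p :=
  (hF.contDiffAt (hΩ.mem_nhds hp)).differentiableAt (by norm_num)

lemma diffAt_fderiv_apply {F : ℝ × ℝ → ℝ} {p : ℝ × ℝ} (hΩ : IsOpen Ω)
    (hF : ContDiffOn ℝ 2 F Ω) (hp : p ∈ Ω) (v : ℝ × ℝ) :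
    DifferentiableAt ℝ (fun q => fderiv ℝ F q v) p := by
  have h1 : ContDiffAt ℝ 2 F p := hF.contDiffAt (hΩ.mem_nhds hp)
  have h2 : ContDiffAt ℝ 1 (fderiv ℝ F) p := h1.fderiv_right (by norm_num)
  exact (h2.clm_apply contDiffAt_const).differentiableAt one_ne_zero

/-- symmetry of mixed second partials -/
lemma mixed_symm {F : ℝ × ℝ → ℝ} {p : ℝ × ℝ} (hΩ : IsOpen Ω)
    (hF : ContDiffOn ℝ 2 F Ω) (hp : p ∈ Ω) :
    fderiv ℝ (fun q => fderiv ℝ F q (0, 1)) p (1, 0) =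
      fderiv ℝ (fun q => fderiv ℝ F q (1, 0)) p (0, 1) := by
  have hd : DifferentiableAt ℝ (fderiv ℝ F) p :=
    ((hF.contDiffAt (hΩ.mem_nhds hp)).fderiv_right
      (m := 1) (by norm_num)).differentiableAt one_ne_zero
  have hev : ∀ᶠ q in nhds p, HasFDerivAt F (fderiv ℝ F q) q :=
    Filter.eventually_of_mem (hΩ.mem_nhds hp) fun q hq =>
      (diffAt_of_C2 hΩ hF hq).hasFDerivAt
  have hsym := second_derivative_symmetric_of_eventually hev hd.hasFDerivAt
    ((1 : ℝ), (0 : ℝ)) ((0 : ℝ), (1 : ℝ))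
  have e1 : ∀ v w : ℝ × ℝ, fderiv ℝ (fun q => fderiv ℝ F q v) p w =
      fderiv ℝ (fderiv ℝ F) p w v := by
    intro v w
    have := ((ContinuousLinearMap.apply ℝ ℝ v).hasFDerivAt.comp p hd.hasFDerivAt).fderiv
    calc fderiv ℝ (fun q => fderiv ℝ F q v) p w
        = fderiv ℝ ((ContinuousLinearMap.apply ℝ ℝ v) ∘ (fderiv ℝ F)) p w := rfl
      _ = fderiv ℝ (fderiv ℝ F) p w v := by rw [this]; rfl
  rw [e1, e1]
  exact hsym

end Aux


/-- Partial derivative in `x` of a real-valued function on `ℝ²`. -/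
noncomputable def pdxR (F : ℝ × ℝ → ℝ) (p : ℝ × ℝ) : ℝ :=
  deriv (fun t => F (t, p.2)) p.1

/-- Partial derivative in `y` of a real-valued function on `ℝ²`. -/
noncomputable def pdyR (F : ℝ × ℝ → ℝ) (p : ℝ × ℝ) : ℝ :=
  deriv (fun t => F (p.1, t)) p.2

/-- The Laplacian of a real-valued function on `ℝ²`. -/
noncomputable def lapR (F : ℝ × ℝ → ℝ) (p : ℝ × ℝ) : ℝ :=
  pdxR (pdxR F) p + pdyR (pdyR F) p

/-- Partial derivative in `x` of a complex-valued function on `ℝ²`. -/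
noncomputable def pdx (F : ℝ × ℝ → ℂ) (p : ℝ × ℝ) : ℂ :=
  deriv (fun t => F (t, p.2)) p.1

/-- Partial derivative in `y` of a complex-valued function on `ℝ²`. -/
noncomputable def pdy (F : ℝ × ℝ → ℂ) (p : ℝ × ℝ) : ℂ :=
  deriv (fun t => F (p.1, t)) p.2

/-- The Wirtinger operator `∂_z̄ = ½(∂_x + i∂_y)`. -/
noncomputable def dzbar (F : ℝ × ℝ → ℂ) (p : ℝ × ℝ) : ℂ :=
  (pdx F p + Complex.I * pdy F p) / 2

/-- The Wirtinger operator `∂_z = ½(∂_x − i∂_y)`. -/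
noncomputable def dz (F : ℝ × ℝ → ℂ) (p : ℝ × ℝ) : ℂ :=
  (pdx F p - Complex.I * pdy F p) / 2

/-- Vekua equation, scalar part and the Schrödinger equation: if `W = W₁ + iW₂`
solves `W_z̄ = (f_z̄/f)·W̄` then `ΔW₁ = (Δf/f)·W₁` on `Ω`. -/
theorem vekua_scalar_part_schrodinger
    (Ω : Set (ℝ × ℝ)) (hΩ : IsOpen Ω) (f : ℝ × ℝ → ℝ)
    (hf : ContDiffOn ℝ 2 f Ω) (hfpos : ∀ p ∈ Ω, 0 < f p)
    (W₁ W₂ : ℝ × ℝ → ℝ)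
    (hW₁ : ContDiffOn ℝ 2 W₁ Ω) (hW₂ : ContDiffOn ℝ 2 W₂ Ω)
    (hVek : ∀ p ∈ Ω,
      dzbar (fun q => (W₁ q : ℂ) + (W₂ q : ℂ) * Complex.I) p =
        dzbar (fun q => (f q : ℂ)) p / (f p : ℂ) *
          ((W₁ p : ℂ) - (W₂ p : ℂ) * Complex.I)) :
    ∀ p ∈ Ω, lapR W₁ p = lapR f p / f p * W₁ p := by
  -- shorthand for first partials (canonical representatives)
  set fX : ℝ × ℝ → ℝ := fun q => fderiv ℝ f q (1, 0) with hfX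
  set fY : ℝ × ℝ → ℝ := fun q => fderiv ℝ f q (0, 1) with hfY
  set aX : ℝ × ℝ → ℝ := fun q => fderiv ℝ W₁ q (1, 0) with haX
  set aY : ℝ × ℝ → ℝ := fun q => fderiv ℝ W₁ q (0, 1) with haY
  set bX : ℝ × ℝ → ℝ := fun q => fderiv ℝ W₂ q (1, 0) with hbX
  set bY : ℝ × ℝ → ℝ := fun q => fderiv ℝ W₂ q (0, 1) with hbY
  -- the two real first-order equations on Ω
  have hAB : ∀ q ∈ Ω,
      f q * (aX q - bY q) = fX q * W₁ q + fY q * W₂ q ∧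
      f q * (bX q + aY q) = fY q * W₁ q - fX q * W₂ q := by
    intro q hq
    have hfd := diffAt_of_C2 hΩ hf hq
    have had := diffAt_of_C2 hΩ hW₁ hq
    have hbd := diffAt_of_C2 hΩ hW₂ hq
    -- complex line derivatives
    have hx : HasDerivAt (fun t => ((W₁ (t, q.2) : ℂ) + (W₂ (t, q.2) : ℂ) * Complex.I))
        ((aX q : ℂ) + (bX q : ℂ) * Complex.I) q.1 :=
      ((hasDerivAt_lineX had).ofReal_comp).add
        (((hasDerivAt_lineX hbd).ofReal_comp).mul_const Complex.I)
    have hy : HasDerivAt (fun t => ((W₁ (q.1, t) : ℂ) + (W₂ (q.1, t) : ℂ) * Complex.I))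
        ((aY q : ℂ) + (bY q : ℂ) * Complex.I) q.2 :=
      ((hasDerivAt_lineY had).ofReal_comp).add
        (((hasDerivAt_lineY hbd).ofReal_comp).mul_const Complex.I)
    have hfx : HasDerivAt (fun t => ((f (t, q.2) : ℂ))) ((fX q : ℂ)) q.1 :=
      (hasDerivAt_lineX hfd).ofReal_comp
    have hfy : HasDerivAt (fun t => ((f (q.1, t) : ℂ))) ((fY q : ℂ)) q.2 :=
      (hasDerivAt_lineY hfd).ofReal_comp
    have h := hVek q hq
    rw [dzbar, dzbar, pdx, pdy, pdx, pdy, hx.deriv, hy.deriv, hfx.deriv, hfy.deriv] at h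
    have hfne : (f q : ℂ) ≠ 0 := Complex.ofReal_ne_zero.2 (hfpos q hq).ne'
    field_simp at h
    rw [Complex.ext_iff] at h
    obtain ⟨h1, h2⟩ := h
    simp [Complex.add_re, Complex.add_im, Complex.mul_re, Complex.mul_im] at h1 h2
    constructor <;> nlinarith [h1, h2]
  -- now fix p and differentiate
  intro p hp
  have hfd := diffAt_of_C2 hΩ hf hp
  have had := diffAt_of_C2 hΩ hW₁ hp
  have hbd := diffAt_of_C2 hΩ hW₂ hp
  have hfXd := diffAt_fderiv_apply hΩ hf hp (1, 0)
  have hfYd := diffAt_fderiv_apply hΩ hf hp (0, 1)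
  have haXd := diffAt_fderiv_apply hΩ hW₁ hp (1, 0)
  have haYd := diffAt_fderiv_apply hΩ hW₁ hp (0, 1)
  have hbXd := diffAt_fderiv_apply hΩ hW₂ hp (1, 0)
  have hbYd := diffAt_fderiv_apply hΩ hW₂ hp (0, 1)
  -- second partial values
  set fXX := fderiv ℝ fX p (1, 0)
  set fXY := fderiv ℝ fX p (0, 1)
  set fYX := fderiv ℝ fY p (1, 0)
  set fYY := fderiv ℝ fY p (0, 1)
  set aXX := fderiv ℝ aX p (1, 0)
  set aYY := fderiv ℝ aY p (0, 1)
  set bYX := fderiv ℝ bY p (1, 0)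
  set bXY := fderiv ℝ bX p (0, 1)
  -- Eq1 : x-derivative of equation A at p
  have Eq1 : fX p * (aX p - bY p) + f p * (aXX - bYX) =
      (fXX * W₁ p + fX p * aX p) + (fYX * W₂ p + fY p * bX p) := by
    refine derivX_eq_on hΩ hp (fun q hq => (hAB q hq).1) ?_ ?_
    · exact (hasDerivAt_lineX hfd).mul ((hasDerivAt_lineX haXd).sub (hasDerivAt_lineX hbYd))
    · exact ((hasDerivAt_lineX hfXd).mul (hasDerivAt_lineX had)).add
        ((hasDerivAt_lineX hfYd).mul (hasDerivAt_lineX hbd))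
  -- Eq2 : y-derivative of equation B at p
  have Eq2 : fY p * (bX p + aY p) + f p * (bXY + aYY) =
      (fYY * W₁ p + fY p * aY p) - (fXY * W₂ p + fX p * bY p) := by
    refine derivY_eq_on hΩ hp (fun q hq => (hAB q hq).2) ?_ ?_
    · exact (hasDerivAt_lineY hfd).mul ((hasDerivAt_lineY hbXd).add (hasDerivAt_lineY haYd))
    · exact ((hasDerivAt_lineY hfYd).mul (hasDerivAt_lineY had)).sub
        ((hasDerivAt_lineY hfXd).mul (hasDerivAt_lineY hbd))
  -- symmetry of mixed partials
  have hsymf : fYX = fXY := mixed_symm hΩ hf hp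
  have hsymb : bYX = bXY := mixed_symm hΩ hW₂ hp
  -- Laplacians in terms of the canonical second partials
  have lapF : ∀ (F : ℝ × ℝ → ℝ), ContDiffOn ℝ 2 F Ω →
      lapR F p = fderiv ℝ (fun q => fderiv ℝ F q (1, 0)) p (1, 0)
        + fderiv ℝ (fun q => fderiv ℝ F q (0, 1)) p (0, 1) := by
    intro F hF
    have hx : (fun t => pdxR F (t, p.2)) =ᶠ[nhds p.1]
        (fun t => fderiv ℝ F (t, p.2) (1, 0)) :=
      Filter.eventuallyEq_of_mem (memX hΩ hp) fun t ht =>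
        (hasDerivAt_lineX (diffAt_of_C2 hΩ hF ht)).deriv
    have hy : (fun t => pdyR F (p.1, t)) =ᶠ[nhds p.2]
        (fun t => fderiv ℝ F (p.1, t) (0, 1)) :=
      Filter.eventuallyEq_of_mem (memY hΩ hp) fun t ht =>
        (hasDerivAt_lineY (diffAt_of_C2 hΩ hF ht)).deriv
    have e1 : pdxR (pdxR F) p = fderiv ℝ (fun q => fderiv ℝ F q (1, 0)) p (1, 0) := by
      rw [pdxR, hx.deriv_eq]
      exact (hasDerivAt_lineX (diffAt_fderiv_apply hΩ hF hp (1, 0))).deriv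
    have e2 : pdyR (pdyR F) p = fderiv ℝ (fun q => fderiv ℝ F q (0, 1)) p (0, 1) := by
      rw [pdyR, hy.deriv_eq]
      exact (hasDerivAt_lineY (diffAt_fderiv_apply hΩ hF hp (0, 1))).deriv
    rw [lapR, e1, e2]
  have hlapa : lapR W₁ p = aXX + aYY := lapF W₁ hW₁
  have hlapf : lapR f p = fXX + fYY := lapF f hf
  -- conclude
  have hf0 : f p ≠ 0 := (hfpos p hp).ne'
  rw [hsymf, hsymb] at Eq1
  rw [hlapa, hlapf, div_mul_eq_mul_div, eq_div_iff hf0]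
  linarith [Eq1, Eq2]
end

section
/- Let Ω ⊆ ℝ² be open and f : Ω → ℝ a positive C² function. Suppose W₁, W₂ : Ω → ℝ are C² and satisfy ∂_z̄(W₁ + i W₂) = (f_z̄/f)·(W₁ − i W₂) on Ω. Then ΔW₂ = r₂·W₂ on Ω, where r₂ = 2|∇f|²/f² − Δf/f and |∇f|² = f_x² + f_y². -/
open Filter Topology

lemma hasDerivAt_sliceX' {M : Type*} [NormedAddCommGroup M] [NormedSpace ℝ M]
    {G : ℝ × ℝ → M} {p : ℝ × ℝ} (hG : DifferentiableAt ℝ G p) :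
    HasDerivAt (fun t => G (t, p.2)) (fderiv ℝ G p (1, 0)) p.1 := by
  have h1 : HasDerivAt (fun t : ℝ => (t, p.2)) ((1 : ℝ), (0 : ℝ)) p.1 :=
    (hasDerivAt_id p.1).prodMk (hasDerivAt_const _ _)
  have h2 : HasFDerivAt G (fderiv ℝ G (p.1, p.2)) (p.1, p.2) := by
    rw [Prod.mk.eta]; exact hG.hasFDerivAt
  simpa [Function.comp_def] using h2.comp_hasDerivAt p.1 h1

lemma hasDerivAt_sliceY' {M : Type*} [NormedAddCommGroup M] [NormedSpace ℝ M]
    {G : ℝ × ℝ → M} {p : ℝ × ℝ} (hG : DifferentiableAt ℝ G p) :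
    HasDerivAt (fun t => G (p.1, t)) (fderiv ℝ G p (0, 1)) p.2 := by
  have h1 : HasDerivAt (fun t : ℝ => (p.1, t)) ((0 : ℝ), (1 : ℝ)) p.2 :=
    (hasDerivAt_const _ _).prodMk (hasDerivAt_id p.2)
  have h2 : HasFDerivAt G (fderiv ℝ G (p.1, p.2)) (p.1, p.2) := by
    rw [Prod.mk.eta]; exact hG.hasFDerivAt
  simpa [Function.comp_def] using h2.comp_hasDerivAt p.2 h1

lemma pdxR_congr' {G H : ℝ × ℝ → ℝ} {p : ℝ × ℝ} (h : G =ᶠ[nhds p] H) :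
    pdxR G p = pdxR H p := by
  apply Filter.EventuallyEq.deriv_eq
  have hc : ContinuousAt (fun t : ℝ => (t, p.2)) p.1 :=
    (continuous_id.prodMk continuous_const).continuousAt
  have h' : G =ᶠ[nhds (p.1, p.2)] H := by rwa [Prod.mk.eta]
  exact hc.eventually h'

lemma pdyR_congr' {G H : ℝ × ℝ → ℝ} {p : ℝ × ℝ} (h : G =ᶠ[nhds p] H) :
    pdyR G p = pdyR H p := by
  apply Filter.EventuallyEq.deriv_eq
  have hc : ContinuousAt (fun t : ℝ => (p.1, t)) p.2 :=
    (continuous_const.prodMk continuous_id).continuousAt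
  have h' : G =ᶠ[nhds (p.1, p.2)] H := by rwa [Prod.mk.eta]
  exact hc.eventually h'

lemma diffAt_fderiv_of_contDiffOn {F : ℝ × ℝ → ℝ} {Ω : Set (ℝ × ℝ)} (hΩ : IsOpen Ω)
    (hF : ContDiffOn ℝ 2 F Ω) {p : ℝ × ℝ} (hp : p ∈ Ω) :
    DifferentiableAt ℝ (fderiv ℝ F) p := by
  have h1 : ContDiffOn ℝ 1 (fun x => fderiv ℝ F x) Ω :=
    hF.fderiv_of_isOpen hΩ (by norm_num)
  exact (h1.contDiffAt (hΩ.mem_nhds hp)).differentiableAt one_ne_zero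

lemma sliceX_fderiv {F : ℝ × ℝ → ℝ} {Ω : Set (ℝ × ℝ)} (hΩ : IsOpen Ω)
    (hF : ContDiffOn ℝ 2 F Ω) {p : ℝ × ℝ} (hp : p ∈ Ω) (w : ℝ × ℝ) :
    HasDerivAt (fun t => fderiv ℝ F (t, p.2) w)
      (fderiv ℝ (fderiv ℝ F) p (1, 0) w) p.1 := by
  simpa using (hasDerivAt_sliceX' (diffAt_fderiv_of_contDiffOn hΩ hF hp)).clm_apply
    (hasDerivAt_const p.1 w)

lemma sliceY_fderiv {F : ℝ × ℝ → ℝ} {Ω : Set (ℝ × ℝ)} (hΩ : IsOpen Ω)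
    (hF : ContDiffOn ℝ 2 F Ω) {p : ℝ × ℝ} (hp : p ∈ Ω) (w : ℝ × ℝ) :
    HasDerivAt (fun t => fderiv ℝ F (p.1, t) w)
      (fderiv ℝ (fderiv ℝ F) p (0, 1) w) p.2 := by
  simpa using (hasDerivAt_sliceY' (diffAt_fderiv_of_contDiffOn hΩ hF hp)).clm_apply
    (hasDerivAt_const p.2 w)

lemma symm_snd {F : ℝ × ℝ → ℝ} {Ω : Set (ℝ × ℝ)} (hΩ : IsOpen Ω)
    (hF : ContDiffOn ℝ 2 F Ω) {p : ℝ × ℝ} (hp : p ∈ Ω) (v w : ℝ × ℝ) :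
    fderiv ℝ (fderiv ℝ F) p v w = fderiv ℝ (fderiv ℝ F) p w v :=
  (hF.contDiffAt (hΩ.mem_nhds hp)).isSymmSndFDerivAt (by norm_num) v w


/-- Vekua equation, vector part and the associated Schrödinger equation: if
`W = W₁ + iW₂` solves `W_z̄ = (f_z̄/f)·W̄` then `ΔW₂ = r₂·W₂` on `Ω`, with
`r₂ = 2|∇f|²/f² − Δf/f`. -/
theorem vekua_vector_part_schrodinger
    (Ω : Set (ℝ × ℝ)) (hΩ : IsOpen Ω) (f : ℝ × ℝ → ℝ)
    (hf : ContDiffOn ℝ 2 f Ω) (hfpos : ∀ p ∈ Ω, 0 < f p)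
    (W₁ W₂ : ℝ × ℝ → ℝ)
    (hW₁ : ContDiffOn ℝ 2 W₁ Ω) (hW₂ : ContDiffOn ℝ 2 W₂ Ω)
    (hVek : ∀ p ∈ Ω,
      dzbar (fun q => (W₁ q : ℂ) + (W₂ q : ℂ) * Complex.I) p =
        dzbar (fun q => (f q : ℂ)) p / (f p : ℂ) *
          ((W₁ p : ℂ) - (W₂ p : ℂ) * Complex.I)) :
    ∀ p ∈ Ω,
      lapR W₂ p =
        (2 * ((pdxR f p) ^ 2 + (pdyR f p) ^ 2) / f p ^ 2 - lapR f p / f p)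
          * W₂ p := by
  have hfd : ∀ q ∈ Ω, DifferentiableAt ℝ f q := fun q hq =>
    (hf.contDiffAt (hΩ.mem_nhds hq)).differentiableAt two_ne_zero
  have hW1d : ∀ q ∈ Ω, DifferentiableAt ℝ W₁ q := fun q hq =>
    (hW₁.contDiffAt (hΩ.mem_nhds hq)).differentiableAt two_ne_zero
  have hW2d : ∀ q ∈ Ω, DifferentiableAt ℝ W₂ q := fun q hq =>
    (hW₂.contDiffAt (hΩ.mem_nhds hq)).differentiableAt two_ne_zero
  -- real/imaginary parts of the Vekua equation, for all q ∈ Ω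
  have hRI : ∀ q ∈ Ω,
      (fderiv ℝ W₁ q (1,0) - fderiv ℝ W₂ q (0,1)) * f q
        = fderiv ℝ f q (1,0) * W₁ q + fderiv ℝ f q (0,1) * W₂ q ∧
      (fderiv ℝ W₂ q (1,0) + fderiv ℝ W₁ q (0,1)) * f q
        = fderiv ℝ f q (0,1) * W₁ q - fderiv ℝ f q (1,0) * W₂ q := by
    intro q hq
    have hfq : (f q : ℂ) ≠ 0 := by exact_mod_cast (hfpos q hq).ne'
    have h1 : pdx (fun r => (W₁ r : ℂ) + (W₂ r : ℂ) * Complex.I) q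
        = (fderiv ℝ W₁ q (1,0) : ℂ) + (fderiv ℝ W₂ q (1,0) : ℂ) * Complex.I :=
      (((hasDerivAt_sliceX' (hW1d q hq)).ofReal_comp).add
        (((hasDerivAt_sliceX' (hW2d q hq)).ofReal_comp).mul_const Complex.I)).deriv
    have h2 : pdy (fun r => (W₁ r : ℂ) + (W₂ r : ℂ) * Complex.I) q
        = (fderiv ℝ W₁ q (0,1) : ℂ) + (fderiv ℝ W₂ q (0,1) : ℂ) * Complex.I :=
      (((hasDerivAt_sliceY' (hW1d q hq)).ofReal_comp).add
        (((hasDerivAt_sliceY' (hW2d q hq)).ofReal_comp).mul_const Complex.I)).deriv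
    have h3 : pdx (fun r => ((f r : ℝ) : ℂ)) q = (fderiv ℝ f q (1,0) : ℂ) :=
      ((hasDerivAt_sliceX' (hfd q hq)).ofReal_comp).deriv
    have h4 : pdy (fun r => ((f r : ℝ) : ℂ)) q = (fderiv ℝ f q (0,1) : ℂ) :=
      ((hasDerivAt_sliceY' (hfd q hq)).ofReal_comp).deriv
    have e := hVek q hq
    unfold dzbar at e
    rw [h1, h2, h3, h4] at e
    field_simp at e
    constructor
    · have h := congrArg Complex.re e
      simp [Complex.mul_re, Complex.mul_im, Complex.add_re, Complex.add_im,
        Complex.sub_re, Complex.sub_im] at h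
      linear_combination h
    · have h := congrArg Complex.im e
      simp [Complex.mul_re, Complex.mul_im, Complex.add_re, Complex.add_im,
        Complex.sub_re, Complex.sub_im] at h
      linear_combination h
  intro p hp
  have hfp : f p ≠ 0 := (hfpos p hp).ne'
  -- abbreviations for values at p
  set a := fderiv ℝ f p (1,0) with ha
  set b := fderiv ℝ f p (0,1) with hb
  set a1 := fderiv ℝ W₁ p (1,0) with ha1
  set a2 := fderiv ℝ W₁ p (0,1) with ha2
  set b1 := fderiv ℝ W₂ p (1,0) with hb1
  set b2 := fderiv ℝ W₂ p (0,1) with hb2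
  set fxx := fderiv ℝ (fderiv ℝ f) p (1,0) (1,0) with hfxx
  set fxy := fderiv ℝ (fderiv ℝ f) p (
1,0) (0,1) with hfxy
  set fyy := fderiv ℝ (fderiv ℝ f) p (0,1) (0,1) with hfyy
  set m := fderiv ℝ (fderiv ℝ W₁) p (1,0) (0,1) with hm
  -- the two first-order equations at p
  obtain ⟨eqA, eqB⟩ := hRI p hp
  -- pdxR f p = a, pdyR f p = b
  have hpa : pdxR f p = a := (hasDerivAt_sliceX' (hfd p hp)).deriv
  have hpb : pdyR f p = b := (hasDerivAt_sliceY' (hfd p hp)).deriv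
  -- lapR f p = fxx + fyy
  have hlapf : lapR f p = fxx + fyy := by
    have e1 : pdxR (pdxR f) p = fxx := by
      have hev : pdxR f =ᶠ[nhds p] fun q => fderiv ℝ f q (1,0) := by
        filter_upwards [hΩ.mem_nhds hp] with q hq
        exact (hasDerivAt_sliceX' (hfd q hq)).deriv
      rw [pdxR_congr' hev]
      exact (sliceX_fderiv hΩ hf hp (1,0)).deriv
    have e2 : pdyR (pdyR f) p = fyy := by
      have hev : pdyR f =ᶠ[nhds p] fun q => fderiv ℝ f q (0,1) := by
        filter_upwards [hΩ.mem_nhds hp] with q hq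
        exact (hasDerivAt_sliceY' (hfd q hq)).deriv
      rw [pdyR_congr' hev]
      exact (sliceY_fderiv hΩ hf hp (0,1)).deriv
    rw [lapR, e1, e2]
  -- second x-derivative of W₂
  have h2x : pdxR (pdxR W₂) p =
      ((fxy * W₁ p + b * a1 - (fxx * W₂ p + a * b1)) * f p
        - (b * W₁ p - a * W₂ p) * a) / (f p) ^ 2 - m := by
    have hev : pdxR W₂ =ᶠ[nhds p] fun q =>
        (fderiv ℝ f q (0,1) * W₁ q - fderiv ℝ f q (1,0) * W₂ q) / f q
          - fderiv ℝ W₁ q (0,1) := by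
      filter_upwards [hΩ.mem_nhds hp] with q hq
      have h0 : pdxR W₂ q = fderiv ℝ W₂ q (1,0) := (hasDerivAt_sliceX' (hW2d q hq)).deriv
      have h1 := (hRI q hq).2
      have hfq : f q ≠ 0 := (hfpos q hq).ne'
      rw [h0]
      field_simp
      linarith [h1]
    rw [pdxR_congr' hev]
    have hd : HasDerivAt (fun t =>
        (fderiv ℝ f (t, p.2) (0,1) * W₁ (t, p.2) - fderiv ℝ f (t, p.2) (1,0) * W₂ (t, p.2))
          / f (t, p.2) - fderiv ℝ W₁ (t, p.2) (0,1))
        (((fxy * W₁ p + b * a1 - (fxx * W₂ p + a * b1)) * f p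
          - (b * W₁ p - a * W₂ p) * a) / (f p) ^ 2 - m) p.1 := by
      have hnum : HasDerivAt (fun t =>
          fderiv ℝ f (t, p.2) (0,1) * W₁ (t, p.2) - fderiv ℝ f (t, p.2) (1,0) * W₂ (t, p.2))
          (fxy * W₁ p + b * a1 - (fxx * W₂ p + a * b1)) p.1 := by
        have e1 := (sliceX_fderiv hΩ hf hp (0,1)).mul (hasDerivAt_sliceX' (hW1d p hp))
        have e2 := (sliceX_fderiv hΩ hf hp (1,0)).mul (hasDerivAt_sliceX' (hW2d p hp))
        have := e1.sub e2
        convert this using 1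
        all_goals first | rfl | ring_nf
      have hden : HasDerivAt (fun t => f (t, p.2)) a p.1 := hasDerivAt_sliceX' (hfd p hp)
      have hfrac := hnum.div hden (by simpa [Prod.mk.eta] using hfp)
      have hlast : HasDerivAt (fun t => fderiv ℝ W₁ (t, p.2) (0,1)) m p.1 :=
        sliceX_fderiv hΩ hW₁ hp (0,1)
      have := hfrac.sub hlast
      convert this using 1
      all_goals first | rfl | simp
    exact hd.deriv
  -- second y-derivative of W₂
  have h2y : pdyR (pdyR W₂) p =
      m - ((fxy * W₁ p + a * a2 + (fyy * W₂ p + b * b2)) * f p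
        - (a * W₁ p + b * W₂ p) * b) / (f p) ^ 2 := by
    have hev : pdyR W₂ =ᶠ[nhds p] fun q =>
        fderiv ℝ W₁ q (1,0)
          - (fderiv ℝ f q (1,0) * W₁ q + fderiv ℝ f q (0,1) * W₂ q) / f q := by
      filter_upwards [hΩ.mem_nhds hp] with q hq
      have h0 : pdyR W₂ q = fderiv ℝ W₂ q (0,1) := (hasDerivAt_sliceY' (hW2d q hq)).deriv
      have h1 := (hRI q hq).1
      have hfq : f q ≠ 0 := (hfpos q hq).ne'
      rw [h0]
      field_simp
      linarith [h1]
    rw [pdyR_congr' hev]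
    have hd : HasDerivAt (fun t =>
        fderiv ℝ W₁ (p.1, t) (1,0)
          - (fderiv ℝ f (p.1, t) (1,0) * W₁ (p.1, t) + fderiv ℝ f (p.1, t) (0,1) * W₂ (p.1, t))
            / f (p.1, t))
        (m - ((fxy * W₁ p + a * a2 + (fyy * W₂ p + b * b2)) * f p
          - (a * W₁ p + b * W₂ p) * b) / (f p) ^ 2) p.2 := by
      have hfirst : HasDerivAt (fun t => fderiv ℝ W₁ (p.1, t) (1,0)) m p.2 := by
        have := sliceY_fderiv hΩ hW₁ hp (1,0)
        rwa [symm_snd hΩ hW₁ hp (0,1) (1,0)] at this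
      have hnum : HasDerivAt (fun t =>
          fderiv ℝ f (p.1, t) (1,0) * W₁ (p.1, t) + fderiv ℝ f (p.1, t) (0,1) * W₂ (p.1, t))
          (fxy * W₁ p + a * a2 + (fyy * W₂ p + b * b2)) p.2 := by
        have e1 := (sliceY_fderiv hΩ hf hp (1,0)).mul (hasDerivAt_sliceY' (hW1d p hp))
        have e2 := (sliceY_fderiv hΩ hf hp (0,1)).mul (hasDerivAt_sliceY' (hW2d p hp))
        have := e1.add e2
        convert this using 1
        all_goals first | rfl | (rw [hfxy, symm_snd hΩ hf hp (1,0) (0,1)]; try ring_nf)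
      have hden : HasDerivAt (fun t => f (p.1, t)) b p.2 := hasDerivAt_sliceY' (hfd p hp)
      have hfrac := hnum.div hden (by simpa [Prod.mk.eta] using hfp)
      have := hfirst.sub hfrac
      convert this using 1
      all_goals first | rfl | simp
    exact hd.deriv
  -- assemble
  rw [lapR, h2x, h2y, hpa, hpb, hlapf]
  have key : (b * a1 - a * b1 - a * a2 - b * b2) * f p = (a ^ 2 + b ^ 2) * W₂ p := by
    linear_combination b * eqA - a * eqB
  field_simp
  linear_combination key
end

section
/- Let Ω ⊆ ℝ² be open and f : Ω → ℝ a positive C² function. If W₁, W₂ : Ω → ℝ are C² with W = W₁ + iW₂ satisfying ∂_z̄ W = (f_z̄/f)·W̄, and c ∈ ℝ, then W' := W₁ + i(W₂ + c·f^{-1}) also satisfies ∂_z̄ W' = (f_z̄/f)·conj(W'). Conversely, if W and W' are two solutions with the same scalar part W₁, then (W₂' − W₂)·f is constant on each connected component of Ω. -/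
lemma hasDerivAt_sliceX {F : ℝ × ℝ → ℝ} {p : ℝ × ℝ} (h : DifferentiableAt ℝ F p) :
    HasDerivAt (fun t => F (t, p.2)) (pdxR F p) p.1 := by
  have h1 : HasDerivAt (fun t : ℝ => (t, p.2)) ((1 : ℝ), (0 : ℝ)) p.1 :=
    (hasDerivAt_id p.1).prodMk (hasDerivAt_const _ _)
  have h2 := h.hasFDerivAt.comp_hasDerivAt p.1 h1
  have h3 : pdxR F p = fderiv ℝ F p (1, 0) := by
    simpa [pdxR, Function.comp_def] using h2.deriv
  rw [h3]; exact h2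

lemma hasDerivAt_sliceY {F : ℝ × ℝ → ℝ} {p : ℝ × ℝ} (h : DifferentiableAt ℝ F p) :
    HasDerivAt (fun t => F (p.1, t)) (pdyR F p) p.2 := by
  have h1 : HasDerivAt (fun t : ℝ => (p.1, t)) ((0 : ℝ), (1 : ℝ)) p.2 :=
    (hasDerivAt_const _ _).prodMk (hasDerivAt_id p.2)
  have h2 := h.hasFDerivAt.comp_hasDerivAt p.2 h1
  have h3 : pdyR F p = fderiv ℝ F p (0, 1) := by
    simpa [pdyR, Function.comp_def] using h2.deriv
  rw [h3]; exact h2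

lemma fderiv_eq_zero_of_partials {g : ℝ × ℝ → ℝ} {p : ℝ × ℝ}
    (hdiff : DifferentiableAt ℝ g p)
    (hx : HasDerivAt (fun t => g (t, p.2)) 0 p.1)
    (hy : HasDerivAt (fun t => g (p.1, t)) 0 p.2) :
    HasFDerivAt g (0 : (ℝ × ℝ) →L[ℝ] ℝ) p := by
  have hL := hdiff.hasFDerivAt
  have e1 : fderiv ℝ g p (1, 0) = 0 := by
    have h1 : HasDerivAt (fun t : ℝ => (t, p.2)) ((1 : ℝ), (0 : ℝ)) p.1 :=
      (hasDerivAt_id p.1).prodMk (hasDerivAt_const _ _)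
    exact (hL.comp_hasDerivAt p.1 h1).unique hx
  have e2 : fderiv ℝ g p (0, 1) = 0 := by
    have h1 : HasDerivAt (fun t : ℝ => (p.1, t)) ((0 : ℝ), (1 : ℝ)) p.2 :=
      (hasDerivAt_const _ _).prodMk (hasDerivAt_id p.2)
    exact (hL.comp_hasDerivAt p.2 h1).unique hy
  have : fderiv ℝ g p = 0 := by
    apply ContinuousLinearMap.ext; intro v
    have hv : (v : ℝ × ℝ) = v.1 • ((1 : ℝ), (0 : ℝ)) + v.2 • ((0 : ℝ), (1 : ℝ)) := by
      simp [Prod.ext_iff]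
    rw [ContinuousLinearMap.zero_apply, hv, map_add, map_smul, map_smul, e1, e2]
    simp
  rw [← this]; exact hL

lemma eq_of_fderiv_zero {s : Set (ℝ × ℝ)} (hs : IsOpen s) (hsc : IsPreconnected s)
    {g : ℝ × ℝ → ℝ} (hd : ∀ z ∈ s, HasFDerivAt g (0 : (ℝ × ℝ) →L[ℝ] ℝ) z)
    {x y : ℝ × ℝ} (hx : x ∈ s) (hy : y ∈ s) : g y = g x := by
  have ball_const : ∀ z ∈ s, ∃ ε > 0, Metric.ball z ε ⊆ s ∧
      ∀ w ∈ Metric.ball z ε, g w = g z := by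
    intro z hz
    obtain ⟨ε, hε, hball⟩ := Metric.isOpen_iff.1 hs z hz
    refine ⟨ε, hε, hball, fun w hw => ?_⟩
    refine (convex_ball z ε).is_const_of_fderivWithin_eq_zero
      (fun u hu => ((hd u (hball hu)).differentiableAt).differentiableWithinAt)
      (fun u hu => ?_) hw (Metric.mem_ball_self hε)
    rw [fderivWithin_of_isOpen Metric.isOpen_ball hu]
    exact (hd u (hball hu)).fderiv
  set u : Set (ℝ × ℝ) := {w ∈ s | g w = g x} with hu_def
  set v : Set (ℝ × ℝ) := {w ∈ s | g w ≠ g x} with hv_def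
  have hu : IsOpen u := by
    rw [Metric.isOpen_iff]
    intro z hz
    obtain ⟨ε, hε, hball, hconst⟩ := ball_const z hz.1
    exact ⟨ε, hε, fun w hw => ⟨hball hw, (hconst w hw).trans hz.2⟩⟩
  have hv : IsOpen v := by
    rw [Metric.isOpen_iff]
    intro z hz
    obtain ⟨ε, hε, hball, hconst⟩ := ball_const z hz.1
    exact ⟨ε, hε, fun w hw => ⟨hball hw, (hconst w hw).symm ▸ hz.2⟩⟩
  have hsub : s ⊆ u ∪ v := by
    intro w hw
    by_cases h : g w = g x
    · exact Or.inl ⟨hw, h⟩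
    · exact Or.inr ⟨hw, h⟩
  have hdisj : Disjoint u v := by
    rw [Set.disjoint_left]
    rintro w ⟨_, h1⟩ ⟨_, h2⟩
    exact h2 h1
  have := hsc.subset_left_of_subset_union hu hv hdisj hsub ⟨x, hx, hx, rfl⟩
  exact (this hy).2

/-- Uniqueness of the conjugate metaharmonic function up to `c·f⁻¹`: adding
`c·f⁻¹` to the vector part of a solution of `W_z̄ = (f_z̄/f)·W̄` yields again a
solution; and two solutions with the same scalar part `W₁` have vector parts
whose difference times `f` is constant on connected components of `Ω`. -/
theorem conjugate_uniqueness
    (Ω : Set (ℝ × ℝ)) (hΩ : IsOpen Ω) (f : ℝ × ℝ → ℝ)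
    (hf : ContDiffOn ℝ 2 f Ω) (hfpos : ∀ p ∈ Ω, 0 < f p)
    (W₁ W₂ W₂' : ℝ × ℝ → ℝ) (c : ℝ)
    (hW₁ : ContDiffOn ℝ 2 W₁ Ω) (hW₂ : ContDiffOn ℝ 2 W₂ Ω)
    (hW₂' : ContDiffOn ℝ 2 W₂' Ω)
    (hVek : ∀ p ∈ Ω,
      dzbar (fun q => (W₁ q : ℂ) + (W₂ q : ℂ) * Complex.I) p =
        dzbar (fun q => (f q : ℂ)) p / (f p : ℂ) *
          ((W₁ p : ℂ) - (W₂ p : ℂ) * Complex.I)) :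
    (∀ p ∈ Ω,
      dzbar (fun q => (W₁ q : ℂ) + ((W₂ q + c * (f q)⁻¹ : ℝ) : ℂ) * Complex.I) p =
        dzbar (fun q => (f q : ℂ)) p / (f p : ℂ) *
          ((W₁ p : ℂ) - ((W₂ p + c * (f p)⁻¹ : ℝ) : ℂ) * Complex.I))
    ∧
    ((∀ p ∈ Ω,
      dzbar (fun q => (W₁ q : ℂ) + (W₂' q : ℂ) * Complex.I) p =
        dzbar (fun q => (f q : ℂ)) p / (f p : ℂ) *
          ((W₁ p : ℂ) - (W₂' p : ℂ) * Complex.I)) →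
      ∀ p ∈ Ω, ∀ q ∈ connectedComponentIn Ω p,
        (W₂' q - W₂ q) * f q = (W₂' p - W₂ p) * f p) := by
  constructor
  · intro p hp
    have hp' := hΩ.mem_nhds hp
    have dW1 : DifferentiableAt ℝ W₁ p := (hW₁.contDiffAt hp').differentiableAt two_ne_zero
    have dW2 : DifferentiableAt ℝ W₂ p := (hW₂.contDiffAt hp').differentiableAt two_ne_zero
    have df : DifferentiableAt ℝ f p := (hf.contDiffAt hp').differentiableAt two_ne_zero
    have hf0 : f p ≠ 0 := (hfpos p hp).ne'
    have hf0x : f (p.1, p.2) ≠ 0 := hf0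
    have hf0c : (f p : ℂ) ≠ 0 := by exact_mod_cast hf0
    have hfx : pdx (fun q => (f q : ℂ)) p = ((pdxR f p : ℝ) : ℂ) :=
      ((hasDerivAt_sliceX df).ofReal_comp).deriv
    have hfy : pdy (fun q => (f q : ℂ)) p = ((pdyR f p : ℝ) : ℂ) :=
      ((hasDerivAt_sliceY df).ofReal_comp).deriv
    have hAx : pdx (fun q => (W₁ q : ℂ) + (W₂ q : ℂ) * Complex.I) p =
        ((pdxR W₁ p : ℝ) : ℂ) + ((pdxR W₂ p : ℝ) : ℂ) * Complex.I :=
      (((hasDerivAt_sliceX dW1).ofReal_comp).add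
        (((hasDerivAt_sliceX dW2).ofReal_comp).mul_const _)).deriv
    have hAy : pdy (fun q => (W₁ q : ℂ) + (W₂ q : ℂ) * Complex.I) p =
        ((pdyR W₁ p : ℝ) : ℂ) + ((pdyR W₂ p : ℝ) : ℂ) * Complex.I :=
      (((hasDerivAt_sliceY dW1).ofReal_comp).add
        (((hasDerivAt_sliceY dW2).ofReal_comp).mul_const _)).deriv
    have hTx : pdx (fun q => (W₁ q : ℂ) + ((W₂ q + c * (f q)⁻¹ : ℝ) : ℂ) * Complex.I) p =
        ((pdxR W₁ p : ℝ) : ℂ) +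
          ((pdxR W₂ p + c * (-(pdxR f p) / f p ^ 2) : ℝ) : ℂ) * Complex.I :=
      (((hasDerivAt_sliceX dW1).ofReal_comp).add
        ((((hasDerivAt_sliceX dW2).add
          (((hasDerivAt_sliceX df).inv hf0x).const_mul c)).ofReal_comp).mul_const _)).deriv
    have hTy : pdy (fun q => (W₁ q : ℂ) + ((W₂ q + c * (f q)⁻¹ : ℝ) : ℂ) * Complex.I) p =
        ((pdyR W₁ p : ℝ) : ℂ) +
          ((pdyR W₂ p + c * (-(pdyR f p) / f p ^ 2) : ℝ) : ℂ) * Complex.I :=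
      (((hasDerivAt_sliceY dW1).ofReal_comp).add
        ((((hasDerivAt_sliceY dW2).add
          (((hasDerivAt_sliceY df).inv hf0x).const_mul c)).ofReal_comp).mul_const _)).deriv
    have key := hVek p hp
    simp only [dzbar, hAx, hAy, hfx, hfy] at key
    simp only [dzbar, hTx, hTy, hfx, hfy]
    push_cast at key ⊢
    field_simp at key ⊢
    linear_combination (f p : ℂ) * key
  · intro hVek' p hp q hq
    have hzero : ∀ z ∈ Ω,
        HasFDerivAt (fun q => (W₂' q - W₂ q) * f q) (0 : (ℝ × ℝ) →L[ℝ] ℝ) z := by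
      intro z hz
      have hz' := hΩ.mem_nhds hz
      have dW1 : DifferentiableAt ℝ W₁ z := (hW₁.contDiffAt hz').differentiableAt two_ne_zero
      have dW2 : DifferentiableAt ℝ W₂ z := (hW₂.contDiffAt hz').differentiableAt two_ne_zero
      have dW2' : DifferentiableAt ℝ W₂' z := (hW₂'.contDiffAt hz').differentiableAt two_ne_zero
      have df : DifferentiableAt ℝ f z := (hf.contDiffAt hz').differentiableAt two_ne_zero
      have hf0 : f z ≠ 0 := (hfpos z hz).ne'
      have hf0c : (f z : ℂ) ≠ 0 := by exact_mod_cast hf0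
      have hfx : pdx (fun q => (f q : ℂ)) z = ((pdxR f z : ℝ) : ℂ) :=
        ((hasDerivAt_sliceX df).ofReal_comp).deriv
      have hfy : pdy (fun q => (f q : ℂ)) z = ((pdyR f z : ℝ) : ℂ) :=
        ((hasDerivAt_sliceY df).ofReal_comp).deriv
      have hAx : pdx (fun q => (W₁ q : ℂ) + (W₂ q : ℂ) * Complex.I) z =
          ((pdxR W₁ z : ℝ) : ℂ) + ((pdxR W₂ z : ℝ) : ℂ) * Complex.I :=
        (((hasDerivAt_sliceX dW1).ofReal_comp).add
          (((hasDerivAt_sliceX dW2).ofReal_comp).mul_const _)).deriv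
      have hAy : pdy (fun q => (W₁ q : ℂ) + (W₂ q : ℂ) * Complex.I) z =
          ((pdyR W₁ z : ℝ) : ℂ) + ((pdyR W₂ z : ℝ) : ℂ) * Complex.I :=
        (((hasDerivAt_sliceY dW1).ofReal_comp).add
          (((hasDerivAt_sliceY dW2).ofReal_comp).mul_const _)).deriv
      have hBx : pdx (fun q => (W₁ q : ℂ) + (W₂' q : ℂ) * Complex.I) z =
          ((pdxR W₁ z : ℝ) : ℂ) + ((pdxR W₂' z : ℝ) : ℂ) * Complex.I :=
        (((hasDerivAt_sliceX dW1).ofReal_comp).add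
          (((hasDerivAt_sliceX dW2').ofReal_comp).mul_const _)).deriv
      have hBy : pdy (fun q => (W₁ q : ℂ) + (W₂' q : ℂ) * Complex.I) z =
          ((pdyR W₁ z : ℝ) : ℂ) + ((pdyR W₂' z : ℝ) : ℂ) * Complex.I :=
        (((hasDerivAt_sliceY dW1).ofReal_comp).add
          (((hasDerivAt_sliceY dW2').ofReal_comp).mul_const _)).deriv
      have key := hVek z hz
      have key' := hVek' z hz
      simp only [dzbar, hAx, hAy, hfx, hfy] at key
      simp only [dzbar, hBx, hBy, hfx, hfy] at key'
      field_simp at key key'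
      have hsub := congrArg₂ (fun x y : ℂ => x - y) key' key
      simp only [Complex.ext_iff, Complex.add_re, Complex.add_im, Complex.sub_re,
        Complex.sub_im, Complex.mul_re, Complex.mul_im, Complex.I_re, Complex.I_im,
        Complex.ofReal_re, Complex.ofReal_im, Complex.re_ofNat, Complex.im_ofNat] at hsub
      obtain ⟨h1, h2⟩ := hsub
      have hxeq : (pdxR W₂' z - pdxR W₂ z) * f z + (W₂' z - W₂ z) * pdxR f z = 0 := by
        linear_combination h2
      have hyeq : (pdyR W₂' z - pdyR W₂ z) * f z + (W₂' z - W₂ z) * pdyR f z = 0 := by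
        linear_combination -h1
      have hgx : HasDerivAt (fun t => (W₂' (t, z.2) - W₂ (t, z.2)) * f (t, z.2)) 0 z.1 := by
        have h := ((hasDerivAt_sliceX dW2').sub (hasDerivAt_sliceX dW2)).mul
          (hasDerivAt_sliceX df)
        have e : (pdxR W₂' z - pdxR W₂ z) * f (z.1, z.2) +
            (W₂' (z.1, z.2) - W₂ (z.1, z.2)) * pdxR f z = 0 := hxeq
        replace h := h.congr_deriv e
        exact h
      have hgy : HasDerivAt (fun t => (W₂' (z.1, t) - W₂ (z.1, t)) * f (z.1, t)) 0 z.2 := by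
        have h := ((hasDerivAt_sliceY dW2').sub (hasDerivAt_sliceY dW2)).mul
          (hasDerivAt_sliceY df)
        have e : (pdyR W₂' z - pdyR W₂ z) * f (z.1, z.2) +
            (W₂' (z.1, z.2) - W₂ (z.1, z.2)) * pdyR f z = 0 := hyeq
        replace h := h.congr_deriv e
        exact h
      exact fderiv_eq_zero_of_partials ((dW2'.sub dW2).mul df) hgx hgy
    exact eq_of_fderiv_zero (hΩ.connectedComponentIn) isPreconnected_connectedComponentIn
      (fun z hz => hzero z (connectedComponentIn_subset Ω p hz))
      (mem_connectedComponentIn hp) hq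
end
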